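/- Soundness of the translation from λ[] to the simply typed λ-calculus: if Ψ ⊢ M : T is derivable in λ[] and ⟦Ψ⟧ is defined (i.e., the domains of the contexts in Ψ are pairwise disjoint), then ⟦Ψ⟧ ⊢_λ ⟦M⟧ : ⟦T⟧ is derivable in the simply typed λ-calculus λ→. -/
import Mathlib


/-! # Fitch-style contextual modal type theory λ[] -/

/-- Types of λ[]: base types, function types, contextual modal types `[S⃗]T`. -/
inductive Ty : Type where
  | base : ℕ → Ty
  | arr : Ty → Ty → Ty
  | box : List Ty → Ty → Ty

/-- A context is a finite list of (variable, type) pairs. -/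
abbrev Ctx := List (ℕ × Ty)
/-- A context stack; the head is the innermost (object-level) context Γ₁. -/
abbrev Stack := List Ctx

/-- The range (list of types) of a context. -/
def rngC (Γ : Ctx) : List Ty := Γ.map Prod.snd
/-- The domain (list of variables) of a context. -/
def domC (Γ : Ctx) : List ℕ := Γ.map Prod.fst

/-- Terms of λ[]. -/
inductive Tm : Type where
  | var : ℕ → Tm
  | lam : ℕ → Ty → Tm → Tm
  | app : Tm → Tm → Tm
  | quo : Ctx → Tm → Tm
  | unq : ℕ → Tm → List Tm → Tm

/-- The four modal variants of λ[]. -/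
inductive Variant : Type where
  | K | T | K4 | S4

/-- Admissible unquotation levels for each variant. -/
def Variant.allows : Variant → ℕ → Prop
  | .K, n => n = 1
  | .T, n => n ≤ 1
  | .K4, n => 1 ≤ n
  | .S4, _ => True

mutual
/-- Typing judgment `Ψ ⊢ M : T` of λ[] (variant `v`). -/
inductive Typed (v : Variant) : Stack → Tm → Ty → Prop where
  | var {Γ : Ctx} {Ψ : Stack} {x : ℕ} {T : Ty} :
      (x, T) ∈ Γ → Typed v (Γ :: Ψ) (.var x) T
  | lam {Γ : Ctx} {Ψ : Stack} {x : ℕ} {T S : Ty} {M : Tm} :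
      Typed v ((Γ ++ [(x, T)]) :: Ψ) M S →
      Typed v (Γ :: Ψ) (.lam x T M) (.arr T S)
  | app {Γ : Ctx} {Ψ : Stack} {M N : Tm} {T S : Ty} :
      Typed v (Γ :: Ψ) M (.arr T S) → Typed v (Γ :: Ψ) N T →
      Typed v (Γ :: Ψ) (.app M N) S
  | quo {Γ : Ctx} {Ψ : Stack} {M : Tm} {T : Ty} :
      Typed v (Γ :: Ψ) M T → Typed v Ψ (.quo Γ M) (.box (rngC Γ) T)
  | unq {Ψ Δs : Stack} {M : Tm} {S : Ty} {n : ℕ} {Ns : List Tm} {Ts : List Ty} :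
      v.allows n → Δs.length = n →
      Typed v Ψ M (.box Ts S) →
      TypedSeq v (Δs ++ Ψ) Ns Ts →
      Typed v (Δs ++ Ψ) (.unq n M Ns) S

/-- Sequence typing judgment `Ψ ⊢ N⃗ : T⃗` of λ[] ((Unit) and (Seq) rules). -/
inductive TypedSeq (v : Variant) : Stack → List Tm → List Ty → Prop where
  | nil {Ψ : Stack} : TypedSeq v Ψ [] []
  | cons {Ψ : Stack} {Ns : List Tm} {Ts : List Ty} {M : Tm} {T : Ty} :
      TypedSeq v Ψ Ns Ts → Typed v Ψ M T →
      TypedSeq v Ψ (Ns ++ [M]) (Ts ++ [T])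
end

/-- Substitution contents `σ`. -/
abbrev Subc := List (ℕ × Tm)

/-- Level-`l` substitution `M[σ]_l` (α-renaming being handled implicitly,
following the paper's convention). -/
def Tm.subst (σ : Subc) : ℕ → Tm → Tm
  | l, .var x => if l = 1 then (σ.lookup x).getD (.var x) else .var x
  | l, .lam x T M => .lam x T (M.subst σ l)
  | l, .app M N => .app (M.subst σ l) (N.subst σ l)
  | l, .quo Γ M => .quo Γ (M.subst σ (l + 1))
  | l, .unq k M Ns =>
      .unq k (if l ≤ k then M else M.subst σ (l - k))
        (Ns.attach.map (fun ⟨N, hN⟩ => N.subst σ l))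
termination_by l M => sizeOf M
decreasing_by
  all_goals simp_wf
  all_goals try omega
  all_goals (have := List.sizeOf_lt_of_mem hN; omega)

/-- Level substitution `M↑ᵏ_l`. -/
def Tm.lsub (k : ℕ) : ℕ → Tm → Tm
  | _, .var x => .var x
  | l, .lam x T M => .lam x T (M.lsub k l)
  | l, .app M N => .app (M.lsub k l) (N.lsub k l)
  | l, .quo Γ M => .quo Γ (M.lsub k (l + 1))
  | l, .unq k' M Ns =>
      .unq (if l ≤ k' then k' + k - 1 else k')
        (if l ≤ k' then M else M.lsub k (l - k'))
        (Ns.attach.map (fun ⟨N, hN⟩ => N.lsub k l))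
termination_by l M => sizeOf M
decreasing_by
  all_goals simp_wf
  all_goals try omega
  all_goals (have := List.sizeOf_lt_of_mem hN; omega)

/-- Level-`l` free variables `FV_l(M)`. -/
def Tm.fv : ℕ → Tm → Finset ℕ
  | l, .var x => if l = 1 then {x} else ∅
  | l, .lam x _ M => if l = 1 then (M.fv l).erase x else M.fv l
  | l, .app M N => M.fv l ∪ N.fv l
  | l, .quo _ M => M.fv (l + 1)
  | l, .unq k M Ns =>
      (if l ≤ k then ∅ else M.fv (l - k)) ∪
        (Ns.attach.map (fun ⟨N, hN⟩ => N.fv l)).foldr (· ∪ ·) ∅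
termination_by l M => sizeOf M
decreasing_by
  all_goals simp_wf
  all_goals try omega
  all_goals (have := List.sizeOf_lt_of_mem hN; omega)

/-- β-reduction of λ[] (congruence closure of the two redex rules). -/
inductive Beta : Tm → Tm → Prop where
  | beta {x : ℕ} {T : Ty} {M N : Tm} :
      Beta (.app (.lam x T M) N) (M.subst [(x, N)] 1)
  | unqQuo {n : ℕ} {Γ : Ctx} {M : Tm} {Ns : List Tm} :
      Ns.length = Γ.length →
      Beta (.unq n (.quo Γ M) Ns) ((M.lsub n 1).subst ((domC Γ).zip Ns) 1)
  | lam {x T M M'} : Beta M M' → Beta (.lam x T M) (.lam x T M')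
  | appL {M M' N} : Beta M M' → Beta (.app M N) (.app M' N)
  | appR {M N N'} : Beta N N' → Beta (.app M N) (.app M N')
  | quo {Γ M M'} : Beta M M' → Beta (.quo Γ M) (.quo Γ M')
  | unqHead {n M M' Ns} : Beta M M' → Beta (.unq n M Ns) (.unq n M' Ns)
  | unqArg {n M N N' L₁ L₂} : Beta N N' →
      Beta (.unq n M (L₁ ++ N :: L₂)) (.unq n M (L₁ ++ N' :: L₂))

/-! ## The simply typed λ-calculus λ→ and the translation ⟦·⟧ from λ[] -/

/-- Types of λ→ (same base types, function types only). -/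
inductive STy : Type where
  | base : ℕ → STy
  | arr : STy → STy → STy

/-- Terms of λ→. -/
inductive STm : Type where
  | var : ℕ → STm
  | lam : ℕ → STy → STm → STm
  | app : STm → STm → STm

abbrev SCtx := List (ℕ × STy)

/-- Standard typing judgment `Γ ⊢_λ M : T` of λ→. -/
inductive STyped : SCtx → STm → STy → Prop where
  | var {Γ : SCtx} {x : ℕ} {T : STy} : (x, T) ∈ Γ → STyped Γ (.var x) T
  | lam {Γ : SCtx} {x : ℕ} {T S : STy} {M : STm} :
      STyped (Γ ++ [(x, T)]) M S → STyped Γ (.lam x T M) (.arr T S)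
  | app {Γ : SCtx} {M N : STm} {T S : STy} :
      STyped Γ M (.arr T S) → STyped Γ N T → STyped Γ (.app M N) S

/-- Type translation: `⟦[T₁,…,Tₙ]S⟧ = ⟦T₁⟧ → ⋯ → ⟦Tₙ⟧ → ⟦S⟧`. -/
def Ty.trans : Ty → STy
  | .base n => .base n
  | .arr S T => .arr S.trans T.trans
  | .box Ts T => (Ts.attach.map (fun ⟨S, hS⟩ => S.trans)).foldr .arr T.trans
termination_by T => sizeOf T
decreasing_by
  all_goals simp_wf
  all_goals try omega
  all_goals (have := List.sizeOf_lt_of_mem hS; omega)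

/-- Term translation: quotations become λ-abstractions and unquotations
become applications. -/
def Tm.trans : Tm → STm
  | .var x => .var x
  | .lam x T M => .lam x T.trans M.trans
  | .app M N => .app M.trans N.trans
  | .quo Γ M => Γ.foldr (fun p acc => .lam p.1 p.2.trans acc) M.trans
  | .unq _ M Ns => (Ns.attach.map (fun ⟨N, hN⟩ => N.trans)).foldl .app M.trans
termination_by M => sizeOf M
decreasing_by
  all_goals simp_wf
  all_goals try omega
  all_goals (have := List.sizeOf_lt_of_mem hN; omega)

/-- Context translation (pointwise). -/
def transCtx (Γ : Ctx) : SCtx := Γ.map (fun p => (p.1, p.2.trans))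

/-- Context-stack translation: the concatenation `⟦Γ₁⟧,…,⟦Γₙ⟧` (outermost
context first; recall that in our encoding the head of the stack is the
innermost context). -/
def transStack (Ψ : Stack) : SCtx := (Ψ.reverse.map transCtx).flatten

/-- `⟦Ψ⟧` is defined exactly when the domains of the contexts in `Ψ` are
pairwise disjoint. -/
def DisjointDoms (Ψ : Stack) : Prop :=
  Ψ.Pairwise (fun Γ Δ => ∀ x ∈ domC Γ, x ∉ domC Δ)

/-! ### Auxiliary lemmas for the soundness proof -/

theorem Ty.trans_box (Ts : List Ty) (T : Ty) :
    (Ty.box Ts T).trans = (Ts.map Ty.trans).foldr .arr T.trans := by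
  rw [Ty.trans]; congr 1; simp

theorem Tm.trans_unq (n : ℕ) (M : Tm) (Ns : List Tm) :
    (Tm.unq n M Ns).trans = (Ns.map Tm.trans).foldl .app M.trans := by
  rw [Tm.trans]; congr 1; simp

theorem transStack_cons (Γ : Ctx) (Ψ : Stack) :
    transStack (Γ :: Ψ) = transStack Ψ ++ transCtx Γ := by
  simp [transStack]

theorem transStack_append (Δs Ψ : Stack) :
    transStack (Δs ++ Ψ) = transStack Ψ ++ transStack Δs := by
  simp [transStack]

/-- Weakening for λ→: typing is preserved under any context superset
(the variable rule is plain membership, so duplicates are harmless). -/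
theorem STyped.weaken {Γ Γ' : SCtx} {M : STm} {T : STy}
    (h : STyped Γ M T) (hsub : ∀ p ∈ Γ, p ∈ Γ') : STyped Γ' M T := by
  induction h generalizing Γ' with
  | var hm => exact .var (hsub _ hm)
  | lam _ ih =>
      refine .lam (ih fun p hp => ?_)
      rcases List.mem_append.1 hp with h | h
      · exact List.mem_append.2 (.inl (hsub _ h))
      · exact List.mem_append.2 (.inr h)
  | app _ _ ih1 ih2 => exact .app (ih1 hsub) (ih2 hsub)

theorem quo_sound (Γ : Ctx) (Δ : SCtx) (m : STm) (S : STy)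
    (h : STyped (Δ ++ transCtx Γ) m S) :
    STyped Δ (Γ.foldr (fun p acc => .lam p.1 p.2.trans acc) m)
      (((rngC Γ).map Ty.trans).foldr .arr S) := by
  induction Γ generalizing Δ with
  | nil => simpa [rngC, transCtx] using h
  | cons p Γ ih =>
      simp only [rngC, List.map_cons, List.foldr_cons]
      refine STyped.lam (ih (Δ ++ [(p.1, p.2.trans)]) ?_)
      simpa [transCtx] using h

/-- **Soundness of the translation** from λ[] to λ→ (Lemma B.1): if `Ψ ⊢ M : T`
is derivable in λ[] (any variant) and `⟦Ψ⟧` is defined (the domains of the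
contexts in `Ψ` are pairwise disjoint), then `⟦Ψ⟧ ⊢_λ ⟦M⟧ : ⟦T⟧` is derivable
in the simply typed λ-calculus. -/
theorem translation_sound (v : Variant) (Ψ : Stack) (M : Tm) (T : Ty)
    (h : Typed v Ψ M T) (hdef : DisjointDoms Ψ) :
    STyped (transStack Ψ) M.trans T.trans := by
  clear hdef
  induction h using Typed.rec
    (motive_2 := fun Ψ Ns Ts _ => ∀ m S',
      STyped (transStack Ψ) m ((Ts.map Ty.trans).foldr .arr S') →
      STyped (transStack Ψ) ((Ns.map Tm.trans).foldl .app m) S') with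
  | var hm =>
      rw [transStack_cons, Tm.trans]
      refine .var (List.mem_append.2 (.inr ?_))
      simp only [transCtx, List.mem_map]
      exact ⟨_, hm, rfl⟩
  | lam _ ih =>
      rw [transStack_cons, Tm.trans, Ty.trans]
      refine STyped.lam ?_
      rw [transStack_cons, transCtx, List.map_append] at ih
      simpa [transCtx] using ih
  | app _ _ ih1 ih2 =>
      rw [Tm.trans]
      rw [Ty.trans] at ih1
      exact .app ih1 ih2
  | quo _ ih =>
      rw [transStack_cons] at ih
      rw [Tm.trans, Ty.trans_box]
      exact quo_sound _ _ _ _ ih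
  | unq _ _ _ _ ihM ihNs =>
      rw [Tm.trans_unq]
      refine ihNs _ _ ?_
      rw [transStack_append]
      rw [Ty.trans_box] at ihM
      exact ihM.weaken fun p hp => List.mem_append.2 (.inl hp)
  | nil =>
      rename_i m S' h
      simpa using h
  | cons _ _ ihNs ihM =>
      rename_i m S' h
      simp only [List.map_append, List.foldl_append, List.map_cons,
        List.foldl_cons, List.foldl_nil, List.foldr_append, List.foldr_cons,
        List.foldr_nil] at h ⊢
      exact .app (ihNs m _ h) ihM
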